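/- Let P₀, Q be distinct points of the Euclidean plane, let u₀ = (Q − P₀)/‖Q − P₀‖, let n be the unit normal obtained by rotating u₀ by 90°, and let x = P₀ + s·n with s ≠ 0. Then both the endpoint-distance function p ↦ ‖x − p‖ and the perpendicular-distance function p ↦ |⟨x − Q, n(p)⟩|, where n(p) denotes the 90° rotation of (Q − p)/‖Q − p‖, are differentiable at p = P₀ and their derivatives (gradients) agree: both equal the linear map h ↦ −sgn(s)·⟨n, h⟩, i.e. both have gradient −sgn(s)·n at P₀. -/

import Mathlib

open Real

lemma norm_sub_hasFDerivAt' {E : Type*} [NormedAddCommGroup E] [InnerProductSpace ℝ E]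
    (c p : E) (h : c - p ≠ 0) :
    HasFDerivAt (fun q : E => ‖c - q‖) (-(‖c - p‖⁻¹) • innerSL ℝ (c - p)) p := by
  have hA : HasFDerivAt (fun q : E => c - q) (-(ContinuousLinearMap.id ℝ E)) p := by
    exact ((hasFDerivAt_const c p).sub (hasFDerivAt_id (𝕜 := ℝ) p)).congr_fderiv (zero_sub _)
  have h3 : ‖c - p‖ ^ 2 ≠ 0 := pow_ne_zero _ (norm_ne_zero_iff.2 h)
  have h4 := hA.norm_sq.sqrt h3
  have h5 : (fun q : E => ‖c - q‖) = fun q => √(‖c - q‖ ^ 2) := by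
    funext q; rw [Real.sqrt_sq (norm_nonneg _)]
  rw [h5]
  convert h4 using 1
  ext y
  have hn : √(‖c - p‖ ^ 2) = ‖c - p‖ := Real.sqrt_sq (norm_nonneg _)
  have hne : ‖c - p‖ ≠ 0 := norm_ne_zero_iff.2 h
  simp [hn, real_inner_smul_left, inner_neg_right, two_smul]
  field_simp
  ring

set_option maxHeartbeats 1000000 in
/-- Let `P₀ ≠ Q`, `u₀(p) = (Q − p)/‖Q − p‖`, and let `N p` be the 90° rotation of `u₀(p)`.
For `x = P₀ + s • N P₀` with `s ≠ 0`, both the endpoint-distance function `p ↦ ‖x − p‖`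
and the perpendicular-distance function `p ↦ |⟨x − Q, N p⟩|` are differentiable at `P₀`
with the same derivative, the linear map `h ↦ −sgn(s)·⟨N P₀, h⟩`, i.e. both have gradient
`−sgn(s) • N P₀` at `P₀`. -/
theorem gradients_agree_on_transition_line
    (P₀ Q : EuclideanSpace ℝ (Fin 2)) (hPQ : P₀ ≠ Q)
    (N : EuclideanSpace ℝ (Fin 2) → EuclideanSpace ℝ (Fin 2))
    (hN : ∀ p : EuclideanSpace ℝ (Fin 2),
      N p 0 = -((‖Q - p‖⁻¹ • (Q - p)) 1) ∧ N p 1 = (‖Q - p‖⁻¹ • (Q - p)) 0)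
    (s : ℝ) (hs : s ≠ 0)
    (x : EuclideanSpace ℝ (Fin 2)) (hx : x = P₀ + s • N P₀) :
    HasFDerivAt (fun p : EuclideanSpace ℝ (Fin 2) => ‖x - p‖)
      ((-Real.sign s) • innerSL ℝ (N P₀)) P₀ ∧
    HasFDerivAt (fun p : EuclideanSpace ℝ (Fin 2) => |(inner ℝ (x - Q) (N p) : ℝ)|)
      ((-Real.sign s) • innerSL ℝ (N P₀)) P₀ := by
  have hvne : Q - P₀ ≠ 0 := sub_ne_zero.2 (Ne.symm hPQ)
  have hR : ‖Q - P₀‖ ≠ 0 := norm_ne_zero_iff.2 hvne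
  obtain ⟨hn0, hn1⟩ := hN P₀
  simp only [PiLp.smul_apply, smul_eq_mul, PiLp.sub_apply] at hn0 hn1
  have hRsq : (Q 0 - P₀ 0) ^ 2 + (Q 1 - P₀ 1) ^ 2 = ‖Q - P₀‖ ^ 2 := by
    have h := real_inner_self_eq_norm_sq (Q - P₀)
    simp only [PiLp.inner_apply, Fin.sum_univ_two, RCLike.inner_apply, conj_trivial,
      PiLp.sub_apply] at h
    linear_combination h
  constructor
  · -- endpoint distance
    have hnorm_n : ‖N P₀‖ = 1 := by
      have h1 := real_inner_self_eq_norm_sq (N P₀)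
      simp only [PiLp.inner_apply, Fin.sum_univ_two, RCLike.inner_apply, conj_trivial,
        hn0, hn1] at h1
      have h3 : ‖N P₀‖ ^ 2 = 1 := by
        rw [← h1]; field_simp; linear_combination hRsq
      nlinarith [norm_nonneg (N P₀)]
    have hxP : x - P₀ = s • N P₀ := by rw [hx]; abel
    have hxPne : x - P₀ ≠ 0 := by
      rw [hxP]
      intro hcon
      rcases smul_eq_zero.1 hcon with h | h
      · exact hs h
      · rw [h] at hnorm_n; simp at hnorm_n
    have h1 := norm_sub_hasFDerivAt' x P₀ hxPne
    refine h1.congr_fderiv (Eq.symm ?_)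
    ext y
    rw [hxP]
    have hsn : ‖s • N P₀‖ = |s| := by rw [norm_smul, hnorm_n]; simp
    simp only [ContinuousLinearMap.smul_apply, innerSL_apply_apply, hsn,
      real_inner_smul_left, smul_eq_mul, neg_mul, neg_smul, ContinuousLinearMap.neg_apply]
    rcases hs.lt_or_gt with h | h
    · rw [Real.sign_of_neg h, abs_of_neg h]; field_simp
    · rw [Real.sign_of_pos h, abs_of_pos h]; field_simp
  · -- perpendicular distance
    have hx0 : x 0 = P₀ 0 + s * N P₀ 0 := by
      rw [hx]; simp [PiLp.add_apply, PiLp.smul_apply, smul_eq_mul]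
    have hx1 : x 1 = P₀ 1 + s * N P₀ 1 := by
      rw [hx]; simp [PiLp.add_apply, PiLp.smul_apply, smul_eq_mul]
    set a : ℝ := x 1 - Q 1 with ha
    set b : ℝ := x 0 - Q 0 with hb
    set g : EuclideanSpace ℝ (Fin 2) → ℝ :=
      fun p => ‖Q - p‖⁻¹ * (a * (Q 0 - p 0) - b * (Q 1 - p 1)) with hg
    have hfun : (fun p : EuclideanSpace ℝ (Fin 2) => |(inner ℝ (x - Q) (N p) : ℝ)|)
        = fun p => |g p| := by
      funext p
      congr 1
      obtain ⟨h0, h1⟩ := hN p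
      simp only [hg, PiLp.inner_apply, Fin.sum_univ_two, RCLike.inner_apply, conj_trivial,
        h0, h1, PiLp.smul_apply, smul_eq_mul, PiLp.sub_apply, ha, hb]
      ring
    have hq0 : HasFDerivAt (fun p : EuclideanSpace ℝ (Fin 2) => Q 0 - p 0)
        (-(EuclideanSpace.proj (0 : Fin 2) : EuclideanSpace ℝ (Fin 2) →L[ℝ] ℝ)) P₀ := by
      exact ((hasFDerivAt_const (Q 0) P₀).sub
        (EuclideanSpace.proj (0 : Fin 2) : EuclideanSpace ℝ (Fin 2) →L[ℝ] ℝ).hasFDerivAt).congr_fderiv (zero_sub _)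
    have hq1 : HasFDerivAt (fun p : EuclideanSpace ℝ (Fin 2) => Q 1 - p 1)
        (-(EuclideanSpace.proj (1 : Fin 2) : EuclideanSpace ℝ (Fin 2) →L[ℝ] ℝ)) P₀ := by
      exact ((hasFDerivAt_const (Q 1) P₀).sub
        (EuclideanSpace.proj (1 : Fin 2) : EuclideanSpace ℝ (Fin 2) →L[ℝ] ℝ).hasFDerivAt).congr_fderiv (zero_sub _)
    have hc := (hq0.const_mul a).sub (hq1.const_mul b)
    have hwinv := (hasDerivAt_inv hR).comp_hasFDerivAt P₀ (norm_sub_hasFDerivAt' Q P₀ hvne)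
    have hgderiv := hwinv.mul hc
    have hkey : a * (Q 0 - P₀ 0) - b * (Q 1 - P₀ 1) = s * ‖Q - P₀‖ := by
      rw [ha, hb, hx0, hx1, hn0, hn1]
      field_simp
      linear_combination s * hRsq
    have hgval : g P₀ = s := by
      simp only [hg, hkey]
      field_simp
    have hgne : g P₀ ≠ 0 := by rw [hgval]; exact hs
    have habs := hgderiv.abs hgne
    simp only [Function.comp, Pi.mul_apply, Pi.sub_apply] at habs
    rw [hfun]
    refine habs.congr_fderiv (Eq.symm ?_)
    rw [show ‖Q - P₀‖⁻¹ * (a * (Q 0 - P₀ 0) - b * (Q 1 - P₀ 1)) = s from hgval]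
    ext y
    simp only [ContinuousLinearMap.smul_apply, innerSL_apply_apply, ContinuousLinearMap.add_apply,
      ContinuousLinearMap.coe_smul', Pi.smul_apply, ContinuousLinearMap.coe_sub',
      Pi.sub_apply, ContinuousLinearMap.neg_apply, smul_eq_mul,
      PiLp.inner_apply, Fin.sum_univ_two, RCLike.inner_apply, conj_trivial,
      PiLp.proj_apply, PiLp.sub_apply]
    rcases hs.lt_or_gt with h | h
    · rw [Real.sign_of_neg h, sign_neg h, SignType.coe_neg_one]
      push_cast
      rw [ha, hb, hx0, hx1, hn0, hn1]
      field_simp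
      linear_combination (s * ((Q 0 - P₀ 0) * y 0 + (Q 1 - P₀ 1) * y 1)) * hRsq
    · rw [Real.sign_of_pos h, sign_pos h, SignType.coe_one]
      rw [ha, hb, hx0, hx1, hn0, hn1]
      field_simp
      linear_combination (-s * ((Q 0 - P₀ 0) * y 0 + (Q 1 - P₀ 1) * y 1)) * hRsq
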